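/- Let D be a finite set of defaults containing both the default (a,b) and the default (b,c). If the formulas a and b have the same finite rank with respect to D, then (a,c) belongs to the lexicographic closure D^l of D. -/

import Mathlib

/-!
A model of `a` consistent with `Ẽ_i` violates no default of `E_i`, so the tuple of its
violation set vanishes on the coordinates `0, …, k - i`, which count exactly the defaults of
`D_∞` and of the levels `D_l` with `l ≥ i`; a model violating some default of `E_i` has a
nonzero entry among those coordinates and is therefore strictly more serious. Hence the
`≺`-minimal models of `a` violate no default of `E_i`. As `a` and `b` have rank `i`, both
`(a, b)` and `(b, c)` lie in `E_i`, so such a model satisfies `b` and then `c`.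
-/

open Set

/-- A default is a pair `(a, b)` of formulas, a formula being a set of models. -/
abbrev Default (M : Type*) := Set M × Set M

variable {M : Type*}

/-- The model `m` violates the default `d = (a, b)` iff `m ∈ a \ b`. -/
def Violates (m : M) (d : Default M) : Prop := m ∈ d.1 \ d.2

/-- The formula `c` is consistent with `B̃`, the set of material counterparts of the
defaults in `B`, iff `c ∩ ⋂ B̃ ≠ ∅`. -/
def ConsistentWith (c : Set M) (B : Set (Default M)) : Prop :=
  (c ∩ ⋂ d ∈ B, (d.1ᶜ ∪ d.2)).Nonempty

/-- `B̃, c ⊨ d` : every model of `c` together with all material counterparts of `B`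
is a model of `d`. -/
def EntailsWith (B : Set (Default M)) (c d : Set M) : Prop :=
  c ∩ ⋂ e ∈ B, (e.1ᶜ ∪ e.2) ⊆ d

/-- The level of the model `m` : the number of defaults of `D` violated by `m`. -/
noncomputable def level (D : Set (Default M)) (m : M) : ℕ :=
  {d ∈ D | Violates m d}.ncard

/-- `F` is a maxbase of `D` for `c` : `F ⊆ D`, `c` is consistent with `F̃`, and no
subset of `D` of strictly larger cardinality has its material counterparts
consistent with `c`. -/
def Maxbase (D : Set (Default M)) (c : Set M) (F : Set (Default M)) : Prop :=
  F ⊆ D ∧ ConsistentWith c F ∧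
    ∀ F' : Set (Default M), F' ⊆ D → F.ncard < F'.ncard → ¬ ConsistentWith c F'

/-- `E₀ = D`, `E_{i+1} = {(a,b) ∈ E_i | a is not consistent with Ẽ_i}`. -/
def Ee (D : Set (Default M)) : ℕ → Set (Default M)
  | 0 => D
  | (i + 1) => {d ∈ Ee D i | ¬ ConsistentWith d.1 (Ee D i)}

/-- `c` has rank `i` with respect to `D` : `i` is the least natural number such that
`c` is consistent with `Ẽ_i`. -/
def HasRank (D : Set (Default M)) (c : Set M) (i : ℕ) : Prop :=
  ConsistentWith c (Ee D i) ∧ ∀ j < i, ¬ ConsistentWith c (Ee D j)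

/-- `D_i = E_i \ E_{i+1}`. -/
def Dlev (D : Set (Default M)) (i : ℕ) : Set (Default M) := Ee D i \ Ee D (i + 1)

/-- `D_∞ = ⋂_i E_i`. -/
def Dinf (D : Set (Default M)) : Set (Default M) := ⋂ i, Ee D i

/-- `k` is the order of `D` : the least `k` such that `D_i = ∅` for every finite `i ≥ k`. -/
def IsOrder (D : Set (Default M)) (k : ℕ) : Prop :=
  (∀ i, k ≤ i → Dlev D i = ∅) ∧ ∀ k', (∀ i, k' ≤ i → Dlev D i = ∅) → k ≤ k'

/-- The `(k+1)`-tuple associated to `X ⊆ D` : `n₀ = |D_∞ ∩ X|` and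
`n_i = |D_{k-i} ∩ X|` for `1 ≤ i ≤ k`. -/
noncomputable def tup (D : Set (Default M)) (k : ℕ) (X : Set (Default M)) (i : ℕ) : ℕ :=
  if i = 0 then (Dinf D ∩ X).ncard else (Dlev D (k - i) ∩ X).ncard

/-- The seriousness ordering : `X ≺ Y` iff the tuple of `X` is lexicographically
smaller than the tuple of `Y`. -/
def Serious (D : Set (Default M)) (k : ℕ) (X Y : Set (Default M)) : Prop :=
  ∃ j ≤ k, (∀ i < j, tup D k X i = tup D k Y i) ∧ tup D k X j < tup D k Y j

/-- `V(m)` : the set of defaults of `D` violated by the model `m`. -/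
def Vset (D : Set (Default M)) (m : M) : Set (Default M) := {d ∈ D | Violates m d}

/-- The lexicographic closure `D^l` : `(a,b) ∈ D^l` iff every model of `a` that is
`≺`-minimal among the models of `a` satisfies `b` (models being compared via the
seriousness ordering of the sets of defaults they violate). -/
def LexClos (D : Set (Default M)) (k : ℕ) (a b : Set M) : Prop :=
  ∀ m ∈ a, (∀ m' ∈ a, ¬ Serious D k (Vset D m') (Vset D m)) → m ∈ b

/-- `B` is a basis for `a` : `B ⊆ D`, `a` is consistent with `B̃`, and there is no
`B' ⊆ D` whose material counterparts are consistent with `a` and with `B ≺ B'`. -/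
def LexBasis (D : Set (Default M)) (k : ℕ) (a : Set M) (B : Set (Default M)) : Prop :=
  B ⊆ D ∧ ConsistentWith a B ∧
    ∀ B' : Set (Default M), B' ⊆ D → ConsistentWith a B' → ¬ Serious D k B B'

/-- The rational closure of `D` : the pairs `(a,b)` such that either `a` has no rank,
or the rank of `a` is strictly smaller than the rank of `a ∩ bᶜ` (where `no rank`
counts as larger than every natural number). -/
def RatClos (D : Set (Default M)) (a b : Set M) : Prop :=
  (¬ ∃ i, HasRank D a i) ∨
    ∃ i, HasRank D a i ∧
      ((¬ ∃ j, HasRank D (a ∩ bᶜ) j) ∨ ∃ j, HasRank D (a ∩ bᶜ) j ∧ i < j)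

/-- `ℓ(X) = l` : `l` is the least index `i ≤ k` with `tup X i ≠ 0`, and `l = k + 1`
if the tuple of `X` is all zero. -/
def EllIs (D : Set (Default M)) (k : ℕ) (X : Set (Default M)) (l : ℕ) : Prop :=
  (l ≤ k ∧ tup D k X l ≠ 0 ∧ ∀ i < l, tup D k X i = 0) ∨
    (l = k + 1 ∧ ∀ i ≤ k, tup D k X i = 0)

/-- `X ≪ Y` iff `ℓ(X) > ℓ(Y)`. -/
def Ll (D : Set (Default M)) (k : ℕ) (X Y : Set (Default M)) : Prop :=
  ∃ lx ly, EllIs D k X lx ∧ EllIs D k Y ly ∧ ly < lx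

section Lex

variable {D : Set (Default M)}

lemma Ee_antitone : Antitone (Ee D) :=
  antitone_nat_of_succ_le fun _ _ hd => hd.1

lemma mem_Ee_of_forall_lt_not_consistentWith {d : Default M} (hd : d ∈ D) :
    ∀ {i : ℕ}, (∀ j < i, ¬ ConsistentWith d.1 (Ee D j)) → d ∈ Ee D i
  | 0, _ => hd
  | i + 1, h => ⟨mem_Ee_of_forall_lt_not_consistentWith hd fun j hj => h j (by omega), h i i.lt_succ_self⟩

lemma Dinf_subset_Ee (i : ℕ) : Dinf D ⊆ Ee D i :=
  iInter_subset _ i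

lemma mem_Dinf_or_exists_mem_Dlev {d : Default M} {i : ℕ} (hd : d ∈ Ee D i) :
    d ∈ Dinf D ∨ ∃ l, i ≤ l ∧ d ∈ Dlev D l := by
  classical
  by_cases h : ∀ j, d ∈ Ee D j
  · exact Or.inl (mem_iInter.mpr h)
  push Not at h
  right
  have hn : ∀ n ≤ i, d ∈ Ee D n := fun n hn => Ee_antitone hn hd
  have hi : i < Nat.find h := lt_of_not_ge fun hle => Nat.find_spec h (hn _ hle)
  obtain ⟨l, hl⟩ := Nat.exists_eq_add_one_of_ne_zero (by omega : Nat.find h ≠ 0)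
  refine ⟨l, by omega, ?_, hl ▸ Nat.find_spec h⟩
  by_contra hdl
  exact Nat.find_min h (by omega) hdl

lemma tup_zero (k : ℕ) (X : Set (Default M)) : tup D k X 0 = (Dinf D ∩ X).ncard :=
  if_pos rfl

lemma tup_of_ne_zero (k : ℕ) (X : Set (Default M)) {j : ℕ} (hj : j ≠ 0) :
    tup D k X j = (Dlev D (k - j) ∩ X).ncard :=
  if_neg hj

lemma tup_eq_zero_of_disjoint_Ee {k i j : ℕ} {Y : Set (Default M)} (hY : Disjoint Y (Ee D i))
    (hj : j ≤ k - i) : tup D k Y j = 0 := by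
  have hzero : ∀ S ⊆ Ee D i, (S ∩ Y).ncard = 0 := fun S hS => by
    rw [(hY.symm.mono_left hS).inter_eq, ncard_empty]
  rcases eq_or_ne j 0 with rfl | hj0
  · rw [tup_zero]
    exact hzero _ (Dinf_subset_Ee i)
  · rw [tup_of_ne_zero k Y hj0]
    exact hzero _ fun d hd => Ee_antitone (by omega : i ≤ k - j) hd.1

lemma exists_tup_ne_zero_of_mem_Ee {k i : ℕ} (hk : ∀ l, k ≤ l → Dlev D l = ∅)
    {X : Set (Default M)} (hX : X.Finite) {d : Default M} (hdX : d ∈ X) (hdE : d ∈ Ee D i) :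
    ∃ j ≤ k - i, tup D k X j ≠ 0 := by
  have hpos : ∀ S : Set (Default M), d ∈ S → (S ∩ X).ncard ≠ 0 := fun S hdS =>
    ((ncard_pos (hX.inter_of_right S)).2 ⟨d, hdS, hdX⟩).ne'
  rcases mem_Dinf_or_exists_mem_Dlev hdE with hd | ⟨l, hil, hdl⟩
  · exact ⟨0, Nat.zero_le _, by rw [tup_zero]; exact hpos _ hd⟩
  · have hlk : l < k := lt_of_not_ge fun hkl => by simp [hk l hkl] at hdl
    refine ⟨k - l, by omega, ?_⟩
    rw [tup_of_ne_zero k X (by omega), Nat.sub_sub_self hlk.le]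
    exact hpos _ hdl

lemma serious_of_tup_eq_zero {k n : ℕ} (hn : n ≤ k) {X Y : Set (Default M)}
    (hY : ∀ j ≤ n, tup D k Y j = 0) (hX : ∃ j ≤ n, tup D k X j ≠ 0) : Serious D k Y X := by
  classical
  obtain ⟨hjn, hj⟩ := Nat.find_spec hX
  refine ⟨Nat.find hX, hjn.trans hn, fun i hi => ?_, ?_⟩
  · have hXi : tup D k X i = 0 := by
      by_contra h
      exact Nat.find_min hX hi ⟨hi.le.trans hjn, h⟩
    rw [hXi, hY i (hi.le.trans hjn)]
  · rw [hY _ hjn]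
    exact Nat.pos_of_ne_zero hj

lemma serious_of_disjoint_Ee {k i : ℕ} (hk : ∀ l, k ≤ l → Dlev D l = ∅)
    {X Y : Set (Default M)} (hX : X.Finite) (hY : Disjoint Y (Ee D i)) {d : Default M}
    (hdX : d ∈ X) (hdE : d ∈ Ee D i) : Serious D k Y X :=
  serious_of_tup_eq_zero (Nat.sub_le k i) (fun _ hj => tup_eq_zero_of_disjoint_Ee hY hj)
    (exists_tup_ne_zero_of_mem_Ee hk hX hdX hdE)

lemma mem_iInter_material_iff {m : M} {B : Set (Default M)} :
    m ∈ ⋂ d ∈ B, (d.1ᶜ ∪ d.2) ↔ ∀ d ∈ B, ¬ Violates m d := by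
  simp [Violates, or_iff_not_imp_left]

lemma ConsistentWith.exists_disjoint_Vset {c : Set M} {B : Set (Default M)}
    (h : ConsistentWith c B) : ∃ m ∈ c, Disjoint (Vset D m) B := by
  obtain ⟨m, hmc, hmB⟩ := h
  exact ⟨m, hmc, disjoint_left.2 fun d hd hdB => mem_iInter_material_iff.1 hmB d hdB hd.2⟩

lemma not_violates_of_minimal (hD : D.Finite) {k i : ℕ} (hk : ∀ l, k ≤ l → Dlev D l = ∅)
    {c : Set M} (hc : ConsistentWith c (Ee D i)) {m : M}
    (hmin : ∀ m' ∈ c, ¬ Serious D k (Vset D m') (Vset D m)) {d : Default M} (hd : d ∈ Ee D i) :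
    ¬ Violates m d := fun hv => by
  obtain ⟨m', hm'c, hm'⟩ := hc.exists_disjoint_Vset (D := D)
  exact hmin m' hm'c <| serious_of_disjoint_Ee hk (hD.subset fun _ h => h.1) hm'
    ⟨Ee_antitone (Nat.zero_le i) hd, hv⟩ hd

end Lex

/-- Transitivity for defaults of equal rank: if `(a,b) ∈ D`, `(b,c) ∈ D` and `a`, `b`
have the same finite rank, then `(a,c)` belongs to the lexicographic closure of `D`. -/
theorem lexClos_transitivity_equal_rank
    (D : Set (Default M)) (hD : D.Finite) (k : ℕ) (hk : IsOrder D k)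
    (a b c : Set M) (hab : (a, b) ∈ D) (hbc : (b, c) ∈ D)
    (i : ℕ) (ha : HasRank D a i) (hb : HasRank D b i) :
    LexClos D k a c := by
  intro m hma hmin
  have hm : ∀ d ∈ Ee D i, ¬ Violates m d := fun _ =>
    not_violates_of_minimal hD hk.1 ha.1 hmin
  have hmb : m ∈ b := by_contra fun h =>
    hm _ (mem_Ee_of_forall_lt_not_consistentWith hab ha.2) ⟨hma, h⟩
  exact by_contra fun h => hm _ (mem_Ee_of_forall_lt_not_consistentWith hbc hb.2) ⟨hmb, h⟩
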